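/- arXiv:2109.13691 — 6 statements merged into one kernel-verified Lean document; each statement's English description precedes it below -/
import Mathlib

section
/- An interval exchange transformation T = (π, λ) with irreducible π and rationally independent length vector λ (i.e., Σ_α c_α λ_α = 0 with all c_α ∈ ℤ forces all c_α = 0) satisfies Keane's condition: if T^n(a) = b for discontinuities a, b of T and some n ∈ ℕ, then n = 1, a = T⁻¹(0), and b = 0. -/
open scoped BigOperators
noncomputable section

namespace RV

variable {A : Type*} [Fintype A] [DecidableEq A] {m : ℕ}

/-- Irreducibility of a permutation pair (positions are 0-indexed in `Fin (m+1)`,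
so `d = m+1` and the paper's levels `k = 1, …, d-1` correspond to `k = 0, …, m-1`). -/
def Irreducible (p0 p1 : A ≃ Fin (m+1)) : Prop :=
  ∀ k : ℕ, k < m → ¬ (∀ α : A, (p0 α : ℕ) ≤ k ↔ (p1 α : ℕ) ≤ k)

/-- The suspension cone `Θ^𝒜(π)`. -/
def InTheta (p0 p1 : A ≃ Fin (m+1)) (tau : A → ℝ) : Prop :=
  ∀ k : ℕ, k < m →
    (0 < ∑ α, if (p0 α : ℕ) ≤ k then tau α else 0) ∧
    ((∑ α, if (p1 α : ℕ) ≤ k then tau α else 0) < 0)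

/-- `π₀⁻¹(d)`. -/
def topSym (p0 : A ≃ Fin (m+1)) : A := p0.symm (Fin.last m)

/-- `π₁⁻¹(d)`. -/
def botSym (p1 : A ≃ Fin (m+1)) : A := p1.symm (Fin.last m)

/-- The (forward) winner of one step of Rauzy–Veech induction. -/
def fwWinner (p0 p1 : A ≃ Fin (m+1)) (lam : A → ℝ) : A :=
  if lam (botSym p1) < lam (topSym p0) then topSym p0 else botSym p1

/-- The (forward) loser of one step of Rauzy–Veech induction. -/
def fwLoser (p0 p1 : A ≃ Fin (m+1)) (lam : A → ℝ) : A :=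
  if lam (botSym p1) < lam (topSym p0) then botSym p1 else topSym p0

/-- The left endpoint of the interval `I_α`. -/
def leftEndF (p0 : A ≃ Fin (m+1)) (lam : A → ℝ) (α : A) : ℝ :=
  ∑ β, if (p0 β : ℕ) < (p0 α : ℕ) then lam β else 0

/-- The translation amount `δ_α`. -/
def deltaF (p0 p1 : A ≃ Fin (m+1)) (lam : A → ℝ) (α : A) : ℝ :=
  (∑ β, if (p1 β : ℕ) < (p1 α : ℕ) then lam β else 0) - leftEndF p0 lam α

/-- The interval exchange transformation `T = (π, λ)` on `[0, |λ|)`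
(extended by the identity off that interval). -/
def ietMap (p0 p1 : A ≃ Fin (m+1)) (lam : A → ℝ) : ℝ → ℝ := fun x =>
  if h : ∃ α : A, x ∈ Set.Ico (leftEndF p0 lam α) (leftEndF p0 lam α + lam α)
  then x + deltaF p0 p1 lam h.choose else x

/-!
Write `L₀ ε = leftEndF p0 lam ε` and `L₁ ε = leftEndF p1 lam ε`. Each step of an orbit adds
`δ_ε = L₁ ε - L₀ ε` for the interval `I_ε` the point lies in, and `T (L₀ α) = L₁ α`. So a
connection `T^[n] (L₀ α) = L₀ β` with visit counts `v` reads `∑ u_ε L₀ ε = ∑ z_ε L₁ ε` for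
`u = v + e_β` and `z = v + e_α`. Expanding the endpoints in `λ`, rational independence
identifies coefficients: for every letter `γ`, the `u`-weight of the letters after `γ` in `π₀`
equals the `z`-weight of the letters after `γ` in `π₁`. The letters after which this weight
vanishes form a final segment of both rows of `π`; it contains the last letter of `π₀` and,
as `u β > 0` with `β` not first, misses the first one. A proper common final segment
contradicts irreducibility, so there are no connections and the conclusion holds vacuously.
-/

section

omit [DecidableEq A]

def weightAfter (q : A ≃ Fin (m+1)) (w : A → ℕ) (γ : A) : ℕ :=
  ∑ ε, if q γ < q ε then w ε else 0

lemma weightAfter_eq_zero_iff (q : A ≃ Fin (m+1)) (w : A → ℕ) (γ : A) :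
    weightAfter q w γ = 0 ↔ ∀ ε, q γ < q ε → w ε = 0 := by
  simp [weightAfter, Finset.sum_eq_zero_iff]

lemma isUpperSet_image_setOf_weightAfter_eq_zero (q : A ≃ Fin (m+1)) (w : A → ℕ) :
    IsUpperSet (q '' {γ | weightAfter q w γ = 0}) := by
  intro i j hij hi
  rw [Equiv.image_eq_preimage_symm] at hi ⊢
  simp only [Set.mem_preimage, Set.mem_ofPred_eq, weightAfter_eq_zero_iff,
    Equiv.apply_symm_apply] at hi ⊢
  exact fun ε hε => hi ε (hij.trans_lt hε)

lemma not_irreducible_of_isUpperSet_image (p0 p1 : A ≃ Fin (m+1)) {S : Set A}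
    (hne : S.Nonempty) (hne_univ : S ≠ Set.univ)
    (h0 : IsUpperSet (p0 '' S)) (h1 : IsUpperSet (p1 '' S)) :
    ¬ Irreducible p0 p1 := by
  have hcard : (p0 '' S).ncard = (p1 '' S).ncard := by
    rw [Set.ncard_image_of_injective _ p0.injective,
      Set.ncard_image_of_injective _ p1.injective]
  have himage : p0 '' S = p1 '' S := by
    rcases h0.total h1 with h | h
    · exact Set.eq_of_subset_of_ncard_le h hcard.ge
    · exact (Set.eq_of_subset_of_ncard_le h hcard.le).symm
  obtain ⟨t, ht⟩ : ∃ t, p0 '' S = Set.Ici t :=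
    h0.eq_empty_or_Ici.resolve_left (hne.image p0).ne_empty
  have mem_iff (q : A ≃ Fin (m+1)) (hq : q '' S = Set.Ici t) (γ : A) :
      γ ∈ S ↔ t ≤ q γ := by
    rw [← Set.mem_Ici, ← hq, q.injective.mem_set_image]
  have ht0 : (t : ℕ) ≠ 0 := by
    intro h0
    apply hne_univ
    ext γ
    simp [mem_iff p0 ht, Fin.le_def, h0]
  intro hirr
  apply hirr (t - 1) (by omega)
  intro γ
  have h := (mem_iff p0 ht γ).symm.trans (mem_iff p1 (himage ▸ ht) γ)
  rw [Fin.le_def, Fin.le_def] at h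
  omega

lemma not_irreducible_of_weightAfter_eq (p0 p1 : A ≃ Fin (m+1)) {u z : A → ℕ}
    (h : weightAfter p0 u = weightAfter p1 z) {β : A} (hβ : (p0 β : ℕ) ≠ 0)
    (huβ : u β ≠ 0) :
    ¬ Irreducible p0 p1 := by
  have hS : {γ | weightAfter p0 u γ = 0} = {γ | weightAfter p1 z γ = 0} := by rw [h]
  refine not_irreducible_of_isUpperSet_image p0 p1 ⟨topSym p0, ?_⟩ ?_
    (isUpperSet_image_setOf_weightAfter_eq_zero p0 u)
    (hS ▸ isUpperSet_image_setOf_weightAfter_eq_zero p1 z)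
  · simp only [Set.mem_ofPred_eq, weightAfter_eq_zero_iff, topSym, Equiv.apply_symm_apply]
    exact fun ε hε => absurd (Fin.le_last _) hε.not_ge
  · intro huniv
    have hbot : p0.symm 0 ∈ {γ | weightAfter p0 u γ = 0} := huniv ▸ Set.mem_univ _
    simp only [Set.mem_ofPred_eq, weightAfter_eq_zero_iff, Equiv.apply_symm_apply] at hbot
    exact huβ (hbot β (by rw [Fin.lt_def, Fin.val_zero]; omega))

lemma sum_natCast_mul_leftEndF (q : A ≃ Fin (m+1)) (lam : A → ℝ) (w : A → ℕ) :
    ∑ ε, (w ε : ℝ) * leftEndF q lam ε = ∑ γ, (weightAfter q w γ : ℝ) * lam γ := by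
  simp only [leftEndF, weightAfter, Nat.cast_sum, Nat.cast_ite, Nat.cast_zero, Finset.mul_sum,
    Finset.sum_mul]
  rw [Finset.sum_comm]
  refine Finset.sum_congr rfl fun γ _ => Finset.sum_congr rfl fun ε _ => ?_
  simp only [Fin.val_fin_lt]
  split_ifs <;> ring

lemma eq_of_sum_natCast_mul_eq {lam : A → ℝ}
    (hind : ∀ c : A → ℤ, (∑ α, (c α : ℝ) * lam α) = 0 → ∀ α, c α = 0)
    {u z : A → ℕ}
    (h : ∑ α, (u α : ℝ) * lam α = ∑ α, (z α : ℝ) * lam α) : u = z := by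
  have hc := hind (fun α => u α - z α) (by
    push_cast
    simp only [sub_mul, Finset.sum_sub_distrib, h, sub_self])
  funext α
  exact_mod_cast sub_eq_zero.mp (hc α)

lemma deltaF_eq_sub (p0 p1 : A ≃ Fin (m+1)) (lam : A → ℝ) (α : A) :
    deltaF p0 p1 lam α = leftEndF p1 lam α - leftEndF p0 lam α := rfl

end

lemma leftEndF_add_le_leftEndF (p0 : A ≃ Fin (m+1)) {lam : A → ℝ} (hlam : ∀ α, 0 < lam α)
    {ε α : A} (h : p0 ε < p0 α) : leftEndF p0 lam ε + lam ε ≤ leftEndF p0 lam α := by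
  have hε : lam ε = ∑ β, if β = ε then lam β else 0 := by simp
  rw [hε, leftEndF, leftEndF, ← Finset.sum_add_distrib]
  refine Finset.sum_le_sum fun β _ => ?_
  rcases eq_or_ne β ε with rfl | hβ
  · simp [Fin.val_fin_lt, h]
  · rw [if_neg hβ, add_zero]
    split_ifs <;> first | rfl | exact (hlam β).le | omega

lemma eq_of_leftEndF_mem_Ico (p0 : A ≃ Fin (m+1)) {lam : A → ℝ} (hlam : ∀ α, 0 < lam α)
    {α ε : A}
    (h : leftEndF p0 lam α ∈ Set.Ico (leftEndF p0 lam ε) (leftEndF p0 lam ε + lam ε)) :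
    ε = α := by
  rcases lt_trichotomy (p0 ε) (p0 α) with hlt | heq | hgt
  · linarith [leftEndF_add_le_leftEndF p0 hlam hlt, h.2]
  · exact p0.injective heq
  · linarith [leftEndF_add_le_leftEndF p0 hlam hgt, h.1, hlam α]

lemma ietMap_leftEndF (p0 p1 : A ≃ Fin (m+1)) {lam : A → ℝ} (hlam : ∀ α, 0 < lam α)
    (α : A) :
    ietMap p0 p1 lam (leftEndF p0 lam α) = leftEndF p1 lam α := by
  have hα :
      ∃ ε, leftEndF p0 lam α ∈ Set.Ico (leftEndF p0 lam ε) (leftEndF p0 lam ε + lam ε) :=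
    ⟨α, le_rfl, lt_add_of_pos_right _ (hlam α)⟩
  rw [ietMap, dif_pos hα, eq_of_leftEndF_mem_Ico p0 hlam hα.choose_spec, deltaF_eq_sub]
  ring

lemma exists_ietMap_eq_add_sum (p0 p1 : A ≃ Fin (m+1)) (lam : A → ℝ) (x : ℝ) :
    ∃ v : A → ℕ, ietMap p0 p1 lam x = x + ∑ ε, (v ε : ℝ) * deltaF p0 p1 lam ε := by
  unfold ietMap
  split_ifs with hx
  · exact ⟨fun ε => if ε = hx.choose then 1 else 0, by simp⟩
  · exact ⟨0, by simp⟩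

lemma exists_iterate_ietMap_eq_add_sum (p0 p1 : A ≃ Fin (m+1)) (lam : A → ℝ) (n : ℕ)
    (x : ℝ) :
    ∃ v : A → ℕ, (ietMap p0 p1 lam)^[n] x = x + ∑ ε, (v ε : ℝ) * deltaF p0 p1 lam ε := by
  induction n with
  | zero => exact ⟨0, by simp⟩
  | succ n ih =>
    obtain ⟨v, hv⟩ := ih
    obtain ⟨v', hv'⟩ := exists_ietMap_eq_add_sum p0 p1 lam ((ietMap p0 p1 lam)^[n] x)
    refine ⟨v + v', ?_⟩
    rw [Function.iterate_succ_apply', hv', hv]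
    simp only [Pi.add_apply, Nat.cast_add, add_mul, Finset.sum_add_distrib, add_assoc]

/-- rational independence of `λ` implies Keane's condition. -/
theorem keane_of_rationally_independent
    (p0 p1 : A ≃ Fin (m+1)) (hirr : Irreducible p0 p1)
    (lam : A → ℝ) (hlam : ∀ α, 0 < lam α)
    (hind : ∀ c : A → ℤ, (∑ α, (c α : ℝ) * lam α) = 0 → ∀ α, c α = 0) :
    ∀ a b : ℝ,
      (∃ α, (p0 α : ℕ) ≠ 0 ∧ a = leftEndF p0 lam α) →
      (∃ α, (p0 α : ℕ) ≠ 0 ∧ b = leftEndF p0 lam α) →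
      ∀ n : ℕ, 1 ≤ n → (ietMap p0 p1 lam)^[n] a = b →
        n = 1 ∧ ietMap p0 p1 lam a = 0 ∧ b = 0 := by
  rintro _ _ ⟨α, -, rfl⟩ ⟨β, hβ, rfl⟩ n hn hab
  obtain ⟨k, rfl⟩ := Nat.exists_eq_add_of_le' hn
  rw [Function.iterate_succ_apply, ietMap_leftEndF p0 p1 hlam] at hab
  obtain ⟨v, hv⟩ := exists_iterate_ietMap_eq_add_sum p0 p1 lam k (leftEndF p1 lam α)
  let u ε := v ε + if ε = β then 1 else 0
  let z ε := v ε + if ε = α then 1 else 0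
  have hbalance :
      ∑ ε, (u ε : ℝ) * leftEndF p0 lam ε = ∑ ε, (z ε : ℝ) * leftEndF p1 lam ε := by
    simp only [u, z, Nat.cast_add, Nat.cast_ite, Nat.cast_one, Nat.cast_zero, add_mul,
      ite_mul, one_mul, zero_mul, Finset.sum_add_distrib, Finset.sum_ite_eq', Finset.mem_univ,
      if_true]
    simp only [deltaF_eq_sub, mul_sub, Finset.sum_sub_distrib] at hv
    linarith
  rw [sum_natCast_mul_leftEndF, sum_natCast_mul_leftEndF] at hbalance
  exact absurd hirr (not_irreducible_of_weightAfter_eq p0 p1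
    (eq_of_sum_natCast_mul_eq hind hbalance) hβ (by simp [u]))

end RV
end
end

section
/- For an IET (π, λ) with λ_{π₀⁻¹(d)} ≠ λ_{π₁⁻¹(d)}, the first return map of (π,λ) to the interval [0, |λ| − min{λ_{π₀⁻¹(d)}, λ_{π₁⁻¹(d)}}) is again an interval exchange transformation of d intervals. -/
open scoped BigOperators
noncomputable section

/-!
Suppose `λ_t < λ_b`, where `t` and `b` are the last symbols of the top and bottom rows; the other
case is the same with the rows exchanged. Every `I_α` with `α ≠ b` is mapped into
`[0, |λ| - λ_b)`, hence into `J = [0, |λ| - λ_t)`. So is the left part of `I_b` of length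
`λ_b - λ_t`, while its right part of length `λ_t` is mapped onto `I_t`, outside `J`, and from there
into `J` by one more step. Hence the first return map to `J` translates each of `d` intervals: it is
the IET whose top row has `t` moved to just after `b`, with `λ_b` replaced by `λ_b - λ_t`.
-/

namespace RV

open Finset Function

lemma exists_mem_Ico_sum_range {M : Type*} [AddCommMonoid M] [LinearOrder M] (g : ℕ → M) {x : M}
    (hx : 0 ≤ x) :
    ∀ {n : ℕ}, x < ∑ i ∈ range n, g i →
      ∃ i < n, x ∈ Set.Ico (∑ j ∈ range i, g j) (∑ j ∈ range (i + 1), g j)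
  | 0, h => absurd h (by simpa using hx)
  | n + 1, h => by
    by_cases hn : x < ∑ i ∈ range n, g i
    · obtain ⟨i, hi, hxi⟩ := exists_mem_Ico_sum_range g hx hn
      exact ⟨i, hi.trans n.lt_succ_self, hxi⟩
    · exact ⟨n, n.lt_succ_self, not_lt.1 hn, h⟩

lemma sum_eq_sum_of_eq_off_pair {A M : Type*} [Fintype A] [DecidableEq A] [AddCommMonoid M]
    {f g : A → M} {a b : A} (hab : a ≠ b) (hoff : ∀ β, β ≠ a → β ≠ b → f β = g β)
    (hpair : f a + f b = g a + g b) :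
    ∑ β, f β = ∑ β, g β := by
  have hb : b ∈ univ.erase a := mem_erase.2 ⟨hab.symm, mem_univ b⟩
  rw [← add_sum_erase _ f (mem_univ a), ← add_sum_erase _ f hb, ← add_sum_erase _ g (mem_univ a),
    ← add_sum_erase _ g hb, ← add_assoc, ← add_assoc, hpair]
  congr 1
  refine sum_congr rfl fun β hβ => ?_
  obtain ⟨hβb, hβa, -⟩ := mem_erase.1 hβ |>.imp_right mem_erase.1
  exact hoff β hβa hβb

section UpdateSub

variable {A : Type*} [DecidableEq A]

lemma update_sub_pos {lam : A → ℝ} (hl : ∀ α, 0 < lam α) {w l : A} (h : lam l < lam w)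
    (α : A) :
    0 < update lam w (lam w - lam l) α := by
  rcases eq_or_ne α w with rfl | hα
  · simpa using h
  · simpa [update_of_ne hα] using hl α

lemma update_sub_le {lam : A → ℝ} {c : ℝ} (hc : 0 ≤ c) (w α : A) :
    update lam w (lam w - c) α ≤ lam α := by
  rcases eq_or_ne α w with rfl | hα
  · simpa using hc
  · rw [update_of_ne hα]

lemma sum_update_sub [Fintype A] (lam : A → ℝ) (w : A) (c : ℝ) :
    ∑ α, update lam w (lam w - c) α = ∑ α, lam α - c := by
  rw [sum_update_of_mem (mem_univ w), sum_sdiff_eq_sub (subset_univ {w}), sum_singleton]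
  ring

end UpdateSub

def IsFirstReturnMap {X : Type*} (T : X → X) (J : Set X) (S : X → X) : Prop :=
  ∀ x ∈ J, ∃ n : ℕ, 1 ≤ n ∧ T^[n] x ∈ J ∧ (∀ k, 1 ≤ k → k < n → T^[k] x ∉ J) ∧ T^[n] x = S x

lemma isFirstReturnMap_of_mapsTo {X : Type*} {T S : X → X} {J : Set X} (hS : Set.MapsTo S J J)
    (h : ∀ x ∈ J, T x = S x ∨ (T x ∉ J ∧ T (T x) = S x)) : IsFirstReturnMap T J S := by
  intro x hx
  rcases h x hx with h1 | ⟨hout, h2⟩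
  · exact ⟨1, le_rfl, show T x ∈ J from h1 ▸ hS hx, fun k hk hkn => absurd hkn (by omega), h1⟩
  · refine ⟨2, one_le_two, show T (T x) ∈ J from h2 ▸ hS hx, fun k hk hkn => ?_, h2⟩
    obtain rfl : k = 1 := by omega
    exact hout

section LengthsInOrder

variable {A : Type*} {m : ℕ} (p : A ≃ Fin (m+1)) (lam : A → ℝ)

def lengthsInOrder (i : ℕ) : ℝ := if h : i < m + 1 then lam (p.symm ⟨i, h⟩) else 0

lemma lengthsInOrder_apply (i : Fin (m+1)) : lengthsInOrder p lam i = lam (p.symm i) := by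
  simp [lengthsInOrder, i.is_lt]

lemma lengthsInOrder_nonneg {lam : A → ℝ} (hl : ∀ α, 0 ≤ lam α) (i : ℕ) :
    0 ≤ lengthsInOrder p lam i := by
  unfold lengthsInOrder
  split_ifs
  exacts [hl _, le_rfl]

lemma val_lt_of_ne_of_eq_last {l β : A} (hl : p l = Fin.last m) (hβ : β ≠ l) : (p β : ℕ) < m :=
  lt_of_le_of_ne (Fin.is_le _) fun h => hβ (p.injective (by rw [hl]; exact Fin.ext h))

end LengthsInOrder

section Positions

variable {A : Type*} [Fintype A] {m : ℕ} (p : A ≃ Fin (m+1)) (lam : A → ℝ)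

def subinterval (α : A) : Set ℝ := Set.Ico (leftEndF p lam α) (leftEndF p lam α + lam α)

lemma leftEndF_eq_sum_range (α : A) :
    leftEndF p lam α = ∑ i ∈ range (p α), lengthsInOrder p lam i := by
  have hfilter : (range (m + 1)).filter (· < (p α : ℕ)) = range (p α) := by
    ext i; simp only [mem_filter, mem_range]; omega
  rw [← hfilter, sum_filter, ← Fin.sum_univ_eq_sum_range
    (fun i => if i < (p α : ℕ) then lengthsInOrder p lam i else 0), leftEndF, ← p.symm.sum_comp]
  simp [lengthsInOrder_apply]

lemma leftEndF_add_eq_sum_range (α : A) :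
    leftEndF p lam α + lam α = ∑ i ∈ range (p α + 1), lengthsInOrder p lam i := by
  rw [sum_range_succ, leftEndF_eq_sum_range, lengthsInOrder_apply, Equiv.symm_apply_apply]

lemma sum_range_lengthsInOrder : ∑ i ∈ range (m + 1), lengthsInOrder p lam i = ∑ α, lam α := by
  rw [← Fin.sum_univ_eq_sum_range, ← p.symm.sum_comp]
  simp [lengthsInOrder_apply]

lemma leftEndF_nonneg {lam : A → ℝ} (hl : ∀ α, 0 ≤ lam α) (α : A) : 0 ≤ leftEndF p lam α := by
  rw [leftEndF_eq_sum_range]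
  exact sum_nonneg fun i _ => lengthsInOrder_nonneg p hl i

lemma leftEndF_of_succ {α β : A} (h : (p β : ℕ) = p α + 1) :
    leftEndF p lam β = leftEndF p lam α + lam α := by
  rw [leftEndF_add_eq_sum_range, leftEndF_eq_sum_range, h]

lemma leftEndF_of_last {l : A} (hl : p l = Fin.last m) :
    leftEndF p lam l = ∑ α, lam α - lam l := by
  rw [eq_sub_iff_add_eq, leftEndF_add_eq_sum_range, hl, Fin.val_last, sum_range_lengthsInOrder]

lemma leftEndF_add_le_sum {lam : A → ℝ} (hl : ∀ α, 0 ≤ lam α) (α : A) :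
    leftEndF p lam α + lam α ≤ ∑ β, lam β := by
  rw [leftEndF_add_eq_sum_range, ← sum_range_lengthsInOrder p]
  exact sum_le_sum_of_subset_of_nonneg (range_subset_range.2 (p α).is_lt)
    fun i _ _ => lengthsInOrder_nonneg p hl i

lemma leftEndF_add_le_leftEndF_s2 {lam : A → ℝ} (hl : ∀ α, 0 ≤ lam α) {α β : A}
    (h : (p α : ℕ) < p β) : leftEndF p lam α + lam α ≤ leftEndF p lam β := by
  rw [leftEndF_add_eq_sum_range, leftEndF_eq_sum_range]
  exact sum_le_sum_of_subset_of_nonneg (range_subset_range.2 h)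
    fun i _ _ => lengthsInOrder_nonneg p hl i

lemma exists_mem_subinterval {x : ℝ} (hx : x ∈ Set.Ico 0 (∑ α, lam α)) :
    ∃ α, x ∈ subinterval p lam α := by
  rw [← sum_range_lengthsInOrder p] at hx
  obtain ⟨i, hi, hxi⟩ := exists_mem_Ico_sum_range _ hx.1 hx.2
  refine ⟨p.symm ⟨i, hi⟩, ?_⟩
  rwa [subinterval, leftEndF_add_eq_sum_range, leftEndF_eq_sum_range, Equiv.apply_symm_apply]

lemma eq_of_mem_subinterval {lam : A → ℝ} (hl : ∀ α, 0 ≤ lam α) {x : ℝ} {α β : A}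
    (hα : x ∈ subinterval p lam α) (hβ : x ∈ subinterval p lam β) : α = β := by
  rcases lt_trichotomy (p α : ℕ) (p β) with h | h | h
  · linarith [leftEndF_add_le_leftEndF_s2 p hl h, hα.2, hβ.1]
  · exact p.injective (Fin.ext h)
  · linarith [leftEndF_add_le_leftEndF_s2 p hl h, hα.1, hβ.2]

end Positions

section IET

variable {A : Type*} [Fintype A] {m : ℕ} (p0 p1 : A ≃ Fin (m+1))

lemma ietMap_of_mem {lam : A → ℝ} (hl : ∀ α, 0 ≤ lam α) {x : ℝ} {α : A}
    (hx : x ∈ subinterval p0 lam α) :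
    ietMap p0 p1 lam x = x - leftEndF p0 lam α + leftEndF p1 lam α := by
  have hex : ∃ β, x ∈ Set.Ico (leftEndF p0 lam β) (leftEndF p0 lam β + lam β) := ⟨α, hx⟩
  rw [ietMap, dif_pos hex, eq_of_mem_subinterval p0 hl hex.choose_spec hx]
  change x + (leftEndF p1 lam α - leftEndF p0 lam α) = _
  ring

lemma mapsTo_ietMap {lam : A → ℝ} (hl : ∀ α, 0 ≤ lam α) :
    Set.MapsTo (ietMap p0 p1 lam) (Set.Ico 0 (∑ α, lam α)) (Set.Ico 0 (∑ α, lam α)) := by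
  intro x hx
  obtain ⟨α, hxα⟩ := exists_mem_subinterval p0 lam hx
  rw [ietMap_of_mem p0 p1 hl hxα]
  constructor <;> linarith [hxα.1, hxα.2, leftEndF_nonneg p1 hl α, leftEndF_add_le_sum p1 hl α]

end IET

section MoveLastAfter

variable {A : Type*} {m : ℕ} (p : A ≃ Fin (m+1))

/-- The row of the loser after a Rauzy–Veech step, the loser being the symbol in last position. -/
def moveLastAfter (w : A) : A ≃ Fin (m+1) := p.trans (Fin.cycleIcc (p w + 1) (Fin.last m))

lemma val_moveLastAfter {w : A} (hw : (p w : ℕ) < m) (α : A) :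
    (moveLastAfter p w α : ℕ) =
      if (p α : ℕ) ≤ p w then (p α : ℕ) else if (p α : ℕ) = m then (p w : ℕ) + 1
      else (p α : ℕ) + 1 := by
  have hw1 : ((p w + 1 : Fin (m+1)) : ℕ) = p w + 1 :=
    Fin.val_add_one_of_lt (Fin.lt_def.2 (by simpa using hw))
  rw [moveLastAfter, Equiv.trans_apply]
  split_ifs with h1 h2
  · rw [Fin.cycleIcc_of_lt (Fin.lt_def.2 (by omega))]
  · rw [show p α = Fin.last m from Fin.ext h2, Fin.cycleIcc_of_last (Fin.le_last _), hw1]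
  · rw [Fin.cycleIcc_of_ge_of_lt (Fin.le_def.2 (by omega))
      (Fin.lt_def.2 (by rw [Fin.val_last]; omega)), Fin.val_add_one_of_lt
      (Fin.lt_def.2 (by rw [Fin.val_last]; omega))]

end MoveLastAfter

section Update

variable {A : Type*} [Fintype A] [DecidableEq A] {m : ℕ} (p : A ≃ Fin (m+1)) (lam : A → ℝ)

lemma leftEndF_update_of_last {l : A} (hl : p l = Fin.last m) (c : ℝ) (α : A) :
    leftEndF p (update lam l c) α = leftEndF p lam α := by
  refine sum_congr rfl fun β _ => ?_
  rcases eq_or_ne β l with rfl | hβ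
  · have := (p α).is_le
    rw [if_neg (by rw [hl, Fin.val_last]; omega), if_neg (by rw [hl, Fin.val_last]; omega)]
  · rw [update_of_ne hβ]

lemma leftEndF_moveLastAfter_of_ne {w l α : A} (hl : p l = Fin.last m) (hwl : w ≠ l)
    (hα : α ≠ l) :
    leftEndF (moveLastAfter p w) (update lam w (lam w - lam l)) α = leftEndF p lam α := by
  have hv := val_moveLastAfter p (val_lt_of_ne_of_eq_last p hl hwl)
  have hαm := val_lt_of_ne_of_eq_last p hl hα
  apply sum_eq_sum_of_eq_off_pair hwl
  · intro β hβw hβl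
    have hβm := val_lt_of_ne_of_eq_last p hl hβl
    rw [update_of_ne hβw, hv, hv]
    split_ifs <;> first | rfl | omega
  · -- `l` now sits right after `w`, and the two new lengths add up to `lam w`
    rw [update_self, update_of_ne hwl.symm, hv, hv, hv, hl, Fin.val_last]
    split_ifs <;> first | ring1 | omega

lemma leftEndF_moveLastAfter_self {w l : A} (hl : p l = Fin.last m) (hwl : w ≠ l) :
    leftEndF (moveLastAfter p w) (update lam w (lam w - lam l)) l =
      leftEndF p lam w + (lam w - lam l) := by
  have hl_succ : (moveLastAfter p w l : ℕ) = moveLastAfter p w w + 1 := by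
    have hw := val_lt_of_ne_of_eq_last p hl hwl
    rw [val_moveLastAfter p hw, val_moveLastAfter p hw, hl, Fin.val_last]
    split_ifs <;> omega
  rw [leftEndF_of_succ _ _ hl_succ, leftEndF_moveLastAfter_of_ne p lam hl hwl hwl, update_self]

end Update

section RauzyVeechStep

variable {A : Type*} [Fintype A] [DecidableEq A] {m : ℕ} (p0 p1 : A ≃ Fin (m+1)) {lam : A → ℝ}

lemma isFirstReturnMap_ietMap_of_top_lt_bot (hl : ∀ α, 0 < lam α)
    (hlt : lam (topSym p0) < lam (botSym p1)) :
    IsFirstReturnMap (ietMap p0 p1 lam) (Set.Ico 0 ((∑ α, lam α) - lam (topSym p0)))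
      (ietMap (moveLastAfter p0 (botSym p1)) p1
        (update lam (botSym p1) (lam (botSym p1) - lam (topSym p0)))) := by
  set t := topSym p0
  set b := botSym p1
  set lam' := update lam b (lam b - lam t)
  have ht : p0 t = Fin.last m := p0.apply_symm_apply _
  have hb : p1 b = Fin.last m := p1.apply_symm_apply _
  have hbt : b ≠ t := fun h => hlt.ne' (congrArg lam h)
  have hl0 : ∀ α, 0 ≤ lam α := fun α => (hl α).le
  have hl' : ∀ α, 0 ≤ lam' α := fun α => (update_sub_pos hl hlt α).le
  have hlt' : lam' t = lam t := update_of_ne hbt.symm _ _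
  rw [← sum_update_sub lam b (lam t)]
  refine isFirstReturnMap_of_mapsTo (mapsTo_ietMap _ _ hl') fun x hx => ?_
  obtain ⟨β, hxβ⟩ := exists_mem_subinterval (moveLastAfter p0 b) lam' hx
  rw [ietMap_of_mem _ _ hl' hxβ, leftEndF_update_of_last p1 lam hb]
  rcases eq_or_ne β t with rfl | hβt
  · -- the new interval of `t` is the right end of `I_b`, which `T` maps onto `I_t`
    right
    have hxβ' := hxβ
    rw [subinterval, leftEndF_moveLastAfter_self p0 lam ht hbt, hlt'] at hxβ'
    have hxb : x ∈ subinterval p0 lam b := ⟨by linarith [hxβ'.1, hl t], by linarith [hxβ'.2]⟩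
    have hTx := ietMap_of_mem p0 p1 hl0 hxb
    rw [leftEndF_of_last p1 lam hb] at hTx
    have hTxt : ietMap p0 p1 lam x ∈ subinterval p0 lam t := by
      rw [subinterval, leftEndF_of_last p0 lam ht, hTx]
      constructor <;> linarith [hxβ'.1, hxβ'.2]
    refine ⟨fun h => ?_, ?_⟩
    · linarith [h.2, hTxt.1, sum_update_sub lam b (lam t), leftEndF_of_last p0 lam ht]
    · rw [ietMap_of_mem p0 p1 hl0 hTxt, hTx, leftEndF_of_last p0 lam ht,
        leftEndF_moveLastAfter_self p0 lam ht hbt]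
      ring
  · left
    have hL0 := leftEndF_moveLastAfter_of_ne p0 lam ht hbt hβt
    rw [subinterval, hL0] at hxβ
    have hxβ' : x ∈ subinterval p0 lam β :=
      Set.Ico_subset_Ico_right (by linarith [update_sub_le (lam := lam) (hl0 t) b β]) hxβ
    rw [ietMap_of_mem p0 p1 hl0 hxβ', hL0]

lemma isFirstReturnMap_ietMap_of_bot_lt_top (hl : ∀ α, 0 < lam α)
    (hlt : lam (botSym p1) < lam (topSym p0)) :
    IsFirstReturnMap (ietMap p0 p1 lam) (Set.Ico 0 ((∑ α, lam α) - lam (botSym p1)))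
      (ietMap p0 (moveLastAfter p1 (topSym p0))
        (update lam (topSym p0) (lam (topSym p0) - lam (botSym p1)))) := by
  set t := topSym p0
  set b := botSym p1
  set lam' := update lam t (lam t - lam b)
  have ht : p0 t = Fin.last m := p0.apply_symm_apply _
  have hb : p1 b = Fin.last m := p1.apply_symm_apply _
  have htb : t ≠ b := fun h => hlt.ne' (congrArg lam h)
  have hl0 : ∀ α, 0 ≤ lam α := fun α => (hl α).le
  have hl' : ∀ α, 0 ≤ lam' α := fun α => (update_sub_pos hl hlt α).le
  rw [← sum_update_sub lam t (lam b)]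
  refine isFirstReturnMap_of_mapsTo (mapsTo_ietMap _ _ hl') fun x hx => ?_
  obtain ⟨β, hxβ⟩ := exists_mem_subinterval p0 lam' hx
  rw [ietMap_of_mem _ _ hl' hxβ, leftEndF_update_of_last p0 lam ht]
  rw [subinterval, leftEndF_update_of_last p0 lam ht] at hxβ
  have hxβ' : x ∈ subinterval p0 lam β :=
    Set.Ico_subset_Ico_right (by linarith [update_sub_le (lam := lam) (hl0 b) t β]) hxβ
  have hTx := ietMap_of_mem p0 p1 hl0 hxβ'
  rcases eq_or_ne β b with rfl | hβb
  · -- `T` maps `I_b` onto the right end of `I_t`, outside `J`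
    right
    rw [leftEndF_of_last p1 lam hb] at hTx
    have hTxt : ietMap p0 p1 lam x ∈ subinterval p0 lam t := by
      rw [subinterval, leftEndF_of_last p0 lam ht, hTx]
      constructor <;> linarith [hxβ'.1, hxβ'.2]
    refine ⟨fun h => ?_, ?_⟩
    · linarith [h.2, hTx, hxβ'.1, sum_update_sub lam t (lam b)]
    · rw [ietMap_of_mem p0 p1 hl0 hTxt, hTx, leftEndF_of_last p0 lam ht,
        leftEndF_moveLastAfter_self p1 lam hb htb]
      ring
  · left
    rw [hTx, leftEndF_moveLastAfter_of_ne p1 lam hb htb hβb]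

end RauzyVeechStep

variable {A : Type*} [Fintype A] [DecidableEq A] {m : ℕ}

theorem first_return_is_iet_general
    (p0 p1 : A ≃ Fin (m+1))
    (lam : A → ℝ) (hlam : ∀ α, 0 < lam α)
    (hne : lam (topSym p0) ≠ lam (botSym p1)) :
    ∃ (q0 q1 : A ≃ Fin (m+1)) (lam' : A → ℝ), (∀ α, 0 < lam' α) ∧
      (∑ α, lam' α) = (∑ α, lam α) - min (lam (topSym p0)) (lam (botSym p1)) ∧
      ∀ x ∈ Set.Ico (0:ℝ) ((∑ α, lam α) - min (lam (topSym p0)) (lam (botSym p1))),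
        ∃ n : ℕ, 1 ≤ n ∧
          (ietMap p0 p1 lam)^[n] x ∈
            Set.Ico (0:ℝ) ((∑ α, lam α) - min (lam (topSym p0)) (lam (botSym p1))) ∧
          (∀ k, 1 ≤ k → k < n → (ietMap p0 p1 lam)^[k] x ∉
            Set.Ico (0:ℝ) ((∑ α, lam α) - min (lam (topSym p0)) (lam (botSym p1)))) ∧
          (ietMap p0 p1 lam)^[n] x = ietMap q0 q1 lam' x := by
  rcases hne.lt_or_gt with hlt | hlt
  · rw [min_eq_left hlt.le]
    exact ⟨moveLastAfter p0 (botSym p1), p1,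
      update lam (botSym p1) (lam (botSym p1) - lam (topSym p0)), update_sub_pos hlam hlt,
      sum_update_sub lam _ _, isFirstReturnMap_ietMap_of_top_lt_bot p0 p1 hlam hlt⟩
  · rw [min_eq_right hlt.le]
    exact ⟨p0, moveLastAfter p1 (topSym p0),
      update lam (topSym p0) (lam (topSym p0) - lam (botSym p1)), update_sub_pos hlam hlt,
      sum_update_sub lam _ _, isFirstReturnMap_ietMap_of_bot_lt_top p0 p1 hlam hlt⟩

/-- if `λ_{π₀⁻¹(d)} ≠ λ_{π₁⁻¹(d)}`, the first return map of `(π,λ)` to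
`[0, |λ| - min{λ_{π₀⁻¹(d)}, λ_{π₁⁻¹(d)}})` is again an IET of `d` intervals. -/
theorem first_return_is_iet
    (p0 p1 : A ≃ Fin (m+1)) (hirr : Irreducible p0 p1)
    (lam : A → ℝ) (hlam : ∀ α, 0 < lam α)
    (hne : lam (topSym p0) ≠ lam (botSym p1)) :
    ∃ (q0 q1 : A ≃ Fin (m+1)) (lam' : A → ℝ), (∀ α, 0 < lam' α) ∧
      (∑ α, lam' α) = (∑ α, lam α) - min (lam (topSym p0)) (lam (botSym p1)) ∧
      ∀ x ∈ Set.Ico (0:ℝ) ((∑ α, lam α) - min (lam (topSym p0)) (lam (botSym p1))),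
        ∃ n : ℕ, 1 ≤ n ∧
          (ietMap p0 p1 lam)^[n] x ∈
            Set.Ico (0:ℝ) ((∑ α, lam α) - min (lam (topSym p0)) (lam (botSym p1))) ∧
          (∀ k, 1 ≤ k → k < n → (ietMap p0 p1 lam)^[k] x ∉
            Set.Ico (0:ℝ) ((∑ α, lam α) - min (lam (topSym p0)) (lam (botSym p1)))) ∧
          (ietMap p0 p1 lam)^[n] x = ietMap q0 q1 lam' x :=
  first_return_is_iet_general p0 p1 lam hlam hne

end RV
end
end

section
/- If the backward Rauzy-Veech induction orbit of (π, λ, τ) is defined for all n ∈ ℕ, then the minimum entry min_{α,β} A^{−n}_{αβ}(π,λ,τ) of the backward Rauzy-Veech matrices is non-decreasing in n, and the total length |λ^{−n}| = Σ_α λ^{−n}_α tends to infinity as n → ∞. -/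
/-!
Each backward step multiplies `A⁻ⁿ` on the left by the transvection `1 + E_{wl}`, which adds the
loser's row to the winner's row. Starting from the identity, entries therefore never decrease, so
neither does the minimal entry, and `A⁻ⁿ ≥ 1` entrywise. The length grows at step `n` by
`(A⁻ⁿ λ)_l ≥ λ_l ≥ min λ > 0`, hence at least linearly.
-/

open scoped BigOperators
noncomputable section

namespace RV

variable {A : Type*} [Fintype A] [DecidableEq A] {m : ℕ}

/-- The data `(π, λ, τ)` of a translation surface (polygonal representation). -/
structure Datum (A : Type*) [Fintype A] (m : ℕ) where
  p0 : A ≃ Fin (m+1)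
  p1 : A ≃ Fin (m+1)
  lam : A → ℝ
  tau : A → ℝ

/-- The backward winner of `(π, λ, τ)`. -/
def bwWinner (D : Datum A m) : A :=
  if (∑ α, D.tau α) < 0 then topSym D.p0 else botSym D.p1

/-- The backward loser of `(π, λ, τ)`. -/
def bwLoser (D : Datum A m) : A :=
  if (∑ α, D.tau α) < 0 then botSym D.p1 else topSym D.p0

/-- One step of the (forward) extended Rauzy–Veech induction: `E = R(D)`. -/
def Step (D E : Datum A m) : Prop :=
  (E.tau = Function.update D.tau (fwWinner D.p0 D.p1 D.lam)
      (D.tau (fwWinner D.p0 D.p1 D.lam) - D.tau (fwLoser D.p0 D.p1 D.lam))) ∧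
  ((D.lam (botSym D.p1) < D.lam (topSym D.p0) ∧ E.p0 = D.p0 ∧
      (∀ α : A, (E.p1 α : ℕ) =
        if (D.p1 α : ℕ) ≤ (D.p1 (topSym D.p0) : ℕ) then (D.p1 α : ℕ)
        else if α = botSym D.p1 then (D.p1 (topSym D.p0) : ℕ) + 1
        else (D.p1 α : ℕ) + 1) ∧
      E.lam = Function.update D.lam (topSym D.p0)
        (D.lam (topSym D.p0) - D.lam (botSym D.p1)))
   ∨
   (D.lam (topSym D.p0) < D.lam (botSym D.p1) ∧ E.p1 = D.p1 ∧
      (∀ α : A, (E.p0 α : ℕ) =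
        if (D.p0 α : ℕ) ≤ (D.p0 (botSym D.p1) : ℕ) then (D.p0 α : ℕ)
        else if α = topSym D.p0 then (D.p0 (botSym D.p1) : ℕ) + 1
        else (D.p0 α : ℕ) + 1) ∧
      E.lam = Function.update D.lam (botSym D.p1)
        (D.lam (botSym D.p1) - D.lam (topSym D.p0))))

/-- `(π, λ, τ) ∈ S₀^𝒜 × Λ^𝒜 × Θ^𝒜`. -/
def Valid (D : Datum A m) : Prop :=
  (∀ α, 0 < D.lam α) ∧ InTheta D.p0 D.p1 D.tau ∧ Irreducible D.p0 D.p1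

/-- An indefinitely defined backward Rauzy–Veech induction orbit:
`x n = R⁻ⁿ(x 0)`, i.e. each `x (n+1)` is mapped to `x n` by one forward step. -/
def IsBackwardOrbit (x : ℕ → Datum A m) : Prop :=
  ∀ n, Step (x (n+1)) (x n) ∧ Valid (x n)

section TransvectionProducts

open Matrix Filter

variable {R : Type*}

theorem tendsto_atTop_of_add_le_succ [AddCommGroup R] [LinearOrder R] [IsOrderedAddMonoid R]
    [Archimedean R] {f : ℕ → R} {c : R} (hc : 0 < c) (hf : ∀ n, f n + c ≤ f (n + 1)) :
    Tendsto f atTop atTop := by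
  have linear_lower_bound : ∀ n : ℕ, f 0 + n • c ≤ f n := by
    intro n
    induction n with
    | zero => simp
    | succ n ih => rw [succ_nsmul, ← add_assoc]; exact (add_le_add_left ih c).trans (hf n)
  exact tendsto_atTop_mono linear_lower_bound
    (tendsto_atTop_add_const_left _ _ (tendsto_id.atTop_nsmul_const hc))

theorem sum_transvection_mulVec [CommRing R] (w l : A) (c : R) (u : A → R) :
    ∑ i, (transvection w l c *ᵥ u) i = ∑ i, u i + c * u l := by
  simp [transvection, add_mulVec, single_mulVec, Function.update_apply, Finset.sum_add_distrib]

theorem apply_le_transvection_mul_apply [CommRing R] [PartialOrder R] [IsOrderedRing R]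
    {w l : A} {c : R} (hc : 0 ≤ c) {M : Matrix A A R} (hM : ∀ i j, 0 ≤ M i j) (i j : A) :
    M i j ≤ (transvection w l c * M) i j := by
  by_cases h : i = w
  · subst h
    rw [transvection_mul_apply_same]
    exact le_add_of_nonneg_right (mul_nonneg hc (hM l j))
  · rw [transvection_mul_apply_of_ne _ _ _ _ h]

variable [CommRing R]

def IsTransvectionProducts (w l : ℕ → A) (B : ℕ → Matrix A A R) : Prop :=
  B 0 = 1 ∧ ∀ n, B (n + 1) = transvection (w n) (l n) 1 * B n

namespace IsTransvectionProducts

variable {w l : ℕ → A} {B : ℕ → Matrix A A R}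

theorem sum_mulVec_succ (hB : IsTransvectionProducts w l B) (v : A → R) (n : ℕ) :
    ∑ i, (B (n + 1) *ᵥ v) i = ∑ i, (B n *ᵥ v) i + (B n *ᵥ v) (l n) := by
  rw [hB.2 n, ← mulVec_mulVec, sum_transvection_mulVec, one_mul]

section OrderedRing

variable [PartialOrder R] [IsOrderedRing R]

theorem nonneg (hB : IsTransvectionProducts w l B) (n : ℕ) : ∀ i j, 0 ≤ B n i j := by
  induction n with
  | zero => intro i j; rw [hB.1, one_apply]; split_ifs <;> simp
  | succ n ih =>
    intro i j
    rw [hB.2 n]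
    exact (ih i j).trans (apply_le_transvection_mul_apply zero_le_one ih i j)

theorem monotone_apply (hB : IsTransvectionProducts w l B) (i j : A) :
    Monotone fun n ↦ B n i j :=
  monotone_nat_of_le_succ fun n ↦ by
    rw [hB.2 n]
    exact apply_le_transvection_mul_apply zero_le_one (hB.nonneg n) i j

theorem one_le_apply_self (hB : IsTransvectionProducts w l B) (n : ℕ) (i : A) : 1 ≤ B n i i := by
  simpa [hB.1] using hB.monotone_apply i i (Nat.zero_le n)

theorem le_mulVec (hB : IsTransvectionProducts w l B) {v : A → R} (hv : ∀ i, 0 ≤ v i)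
    (n : ℕ) (i : A) : v i ≤ (B n *ᵥ v) i :=
  calc v i ≤ B n i i * v i := le_mul_of_one_le_left (hv i) (hB.one_le_apply_self n i)
    _ ≤ ∑ j, B n i j * v j :=
      Finset.single_le_sum (f := fun j ↦ B n i j * v j)
        (fun j _ ↦ mul_nonneg (hB.nonneg n i j) (hv j)) (Finset.mem_univ i)

end OrderedRing

theorem monotone_iInf_apply [ConditionallyCompleteLinearOrder R] [IsOrderedRing R]
    (hB : IsTransvectionProducts w l B) : Monotone fun n ↦ ⨅ p : A × A, B n p.1 p.2 :=
  fun _ _ hmn ↦ ciInf_mono (Set.finite_range _).bddBelow fun p ↦ hB.monotone_apply p.1 p.2 hmn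

theorem tendsto_sum_mulVec_atTop [LinearOrder R] [IsStrictOrderedRing R] [Archimedean R]
    [Nonempty A] (hB : IsTransvectionProducts w l B) {v : A → R} (hv : ∀ i, 0 < v i) :
    Tendsto (fun n ↦ ∑ i, (B n *ᵥ v) i) atTop atTop := by
  obtain ⟨i₀, hi₀⟩ := Finite.exists_min v
  refine tendsto_atTop_of_add_le_succ (hv i₀) fun n ↦ ?_
  rw [hB.sum_mulVec_succ]
  exact add_le_add_right ((hi₀ _).trans (hB.le_mulVec (fun i ↦ (hv i).le) n (l n))) _

end IsTransvectionProducts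

end TransvectionProducts

/-- along an indefinitely defined backward Rauzy–Veech orbit, the minimal
entry of the backward matrices `A⁻ⁿ = B n` is non-decreasing in `n`, and the total
length `|λ⁻ⁿ| = ∑_α (B n · λ)_α` tends to infinity. -/
theorem backward_matrices_min_monotone_and_length_tendsto_atTop
    (x : ℕ → Datum A m) (hx : IsBackwardOrbit x)
    (B : ℕ → Matrix A A ℝ) (hB0 : B 0 = 1)
    (hBrec : ∀ n, B (n+1) =
      (1 + Matrix.single (bwWinner (x n)) (bwLoser (x n)) 1) * B n) :
    Monotone (fun n => ⨅ p : A × A, B n p.1 p.2) ∧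
    Filter.Tendsto (fun n => ∑ α, (B n).mulVec (x 0).lam α) Filter.atTop Filter.atTop := by
  have : Nonempty A := ⟨(x 0).p0.symm 0⟩
  have hB : IsTransvectionProducts (fun n ↦ bwWinner (x n)) (fun n ↦ bwLoser (x n)) B :=
    ⟨hB0, hBrec⟩
  exact ⟨hB.monotone_iInf_apply, hB.tendsto_sum_mulVec_atTop (hx 0).2.1⟩

end RV
end
end

section
/- The surface (π,λ,τ) is of backward 'top' type (i.e., Σ_α τ_α < 0) if and only if R⁻¹(π,λ,τ) is of forward 'top' type; similarly for 'bottom' type. Moreover, α is the backward winner of R⁻¹ at (π,λ,τ) if and only if α is the (forward) winner of R at R⁻¹(π,λ,τ). -/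
/-!
A forward step `R` replaces `τ` of the winner by `τ_winner - τ_loser`, so it lowers `Σ τ` by
`τ_loser`. The loser is the last symbol of the other row, and the cone condition `Θ` at the
top level says `Σ τ - τ_{π₁⁻¹(d)} < 0` and `Σ τ - τ_{π₀⁻¹(d)} > 0`. Hence the sign of `Σ τ`
after a top (bottom) step is negative (positive). The winner's row is not changed by the step,
so its last symbol is the backward winner of the image.
-/

open scoped BigOperators
noncomputable section

namespace RV

variable {A : Type*} [Fintype A] [DecidableEq A] {m : ℕ}

theorem sum_update_sub_apply {M : Type*} [AddCommGroup M] (f : A → M) (w l : A) :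
    ∑ α, Function.update f w (f w - f l) α = ∑ α, f α - f l := by
  rw [Finset.sum_update_of_mem (Finset.mem_univ w),
    Finset.sum_sdiff_eq_sub (Finset.singleton_subset_iff.mpr (Finset.mem_univ w)),
    Finset.sum_singleton]
  abel

theorem sum_ite_le_pred_eq_sub_symm_last {M : Type*} [AddCommGroup M] (hm : 1 ≤ m)
    (p : A ≃ Fin (m+1)) (f : A → M) :
    (∑ α, if (p α : ℕ) ≤ m - 1 then f α else 0) = ∑ α, f α - f (p.symm (Fin.last m)) := by
  have hlevel : ∀ α, (p α : ℕ) ≤ m - 1 ↔ α ≠ p.symm (Fin.last m) := fun α => by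
    rw [Ne, Equiv.eq_symm_apply, Fin.ext_iff, Fin.val_last]
    have := (p α).isLt
    omega
  simp only [hlevel]
  rw [← Finset.sum_filter, Finset.filter_ne', Finset.sum_erase_eq_sub (Finset.mem_univ _)]

theorem InTheta.sum_sub_botSym_neg {p0 p1 : A ≃ Fin (m+1)} {tau : A → ℝ} (hm : 1 ≤ m)
    (h : InTheta p0 p1 tau) : ∑ α, tau α - tau (botSym p1) < 0 := by
  rw [botSym, ← sum_ite_le_pred_eq_sub_symm_last hm]
  exact (h (m - 1) (by omega)).2

theorem InTheta.sum_sub_topSym_pos {p0 p1 : A ≃ Fin (m+1)} {tau : A → ℝ} (hm : 1 ≤ m)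
    (h : InTheta p0 p1 tau) : 0 < ∑ α, tau α - tau (topSym p0) := by
  rw [topSym, ← sum_ite_le_pred_eq_sub_symm_last hm]
  exact (h (m - 1) (by omega)).1

theorem Step.sum_tau {D E : Datum A m} (h : Step D E) :
    ∑ α, E.tau α = ∑ α, D.tau α - D.tau (fwLoser D.p0 D.p1 D.lam) := by
  rw [h.1, sum_update_sub_apply]

/-- `(π,λ,τ)` is of backward top (resp. bottom) type iff `R⁻¹(π,λ,τ)` is
of forward top (resp. bottom) type, and the backward winner at `(π,λ,τ)` is the forward
winner at `R⁻¹(π,λ,τ)`.  Here `E = (π,λ,τ)` and `D = R⁻¹(E)`, i.e. `Step D E`. -/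
theorem backward_type_iff_forward_type
    (hm : 1 ≤ m) (D E : Datum A m) (hval : Valid D) (hstep : Step D E) :
    ((∑ α, E.tau α) < 0 ↔ D.lam (botSym D.p1) < D.lam (topSym D.p0)) ∧
    (0 < (∑ α, E.tau α) ↔ D.lam (topSym D.p0) < D.lam (botSym D.p1)) ∧
    bwWinner E = fwWinner D.p0 D.p1 D.lam := by
  obtain ⟨-, htheta, -⟩ := hval
  rcases hstep.2 with ⟨hlt, hp0, -⟩ | ⟨hlt, hp1, -⟩
  · have hneg : ∑ α, E.tau α < 0 := by
      rw [hstep.sum_tau, fwLoser, if_pos hlt]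
      exact htheta.sum_sub_botSym_neg hm
    refine ⟨iff_of_true hneg hlt, iff_of_false (lt_asymm hneg) (lt_asymm hlt), ?_⟩
    rw [bwWinner, if_pos hneg, fwWinner, if_pos hlt, hp0]
  · have hpos : 0 < ∑ α, E.tau α := by
      rw [hstep.sum_tau, fwLoser, if_neg (lt_asymm hlt)]
      exact htheta.sum_sub_topSym_pos hm
    refine ⟨iff_of_false (lt_asymm hpos) (lt_asymm hlt), iff_of_true hpos hlt, ?_⟩
    rw [bwWinner, if_neg (lt_asymm hpos), fwWinner, if_neg (lt_asymm hlt), hp1]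

end RV
end
end

section
/- There exist translation surfaces (π,λ,τ) possessing a horizontal saddle connection whose backward Rauzy-Veech induction orbit R^{−n}(π,λ,τ) is defined for all n ∈ ℕ. -/
open scoped BigOperators
noncomputable section

namespace RV

variable {A : Type*} [Fintype A] [DecidableEq A] {m : ℕ}

/-- The vertex `a(π,λ,τ,k)` of the polygon (top broken line). -/
def vertA (D : Datum A m) (k : ℕ) : ℝ × ℝ :=
  (∑ α, if (D.p0 α : ℕ) < k then D.lam α else 0,
   ∑ α, if (D.p0 α : ℕ) < k then D.tau α else 0)

/-- The vertex `b(π,λ,τ,k)` of the polygon (bottom broken line). -/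
def vertB (D : Datum A m) (k : ℕ) : ℝ × ℝ :=
  (∑ α, if (D.p1 α : ℕ) < k then D.lam α else 0,
   ∑ α, if (D.p1 α : ℕ) < k then D.tau α else 0)

/-- The vertices of the polygon: these represent the singularity points `Σ`. -/
def vertices (D : Datum A m) : Set (ℝ × ℝ) :=
  {v | ∃ k ≤ m + 1, v = vertA D k ∨ v = vertB D k}

/-- The top side of the polygon corresponding to the symbol `α`. -/
def topSide (D : Datum A m) (α : A) : Set (ℝ × ℝ) :=
  segment ℝ (vertA D (D.p0 α : ℕ)) (vertA D ((D.p0 α : ℕ) + 1))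

/-- The bottom side of the polygon corresponding to the symbol `α`. -/
def botSide (D : Datum A m) (α : A) : Set (ℝ × ℝ) :=
  segment ℝ (vertB D (D.p1 α : ℕ)) (vertB D ((D.p1 α : ℕ) + 1))

/-- The translation identifying the bottom side of `α` with the top side of `α`. -/
def glueVec (D : Datum A m) (α : A) : ℝ × ℝ :=
  vertA D (D.p0 α : ℕ) - vertB D (D.p1 α : ℕ)

def topLine (D : Datum A m) : Set (ℝ × ℝ) := ⋃ α : A, topSide D α
def botLine (D : Datum A m) : Set (ℝ × ℝ) := ⋃ α : A, botSide D α

def totalLen (D : Datum A m) : ℝ := ∑ α, D.lam α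

/-- The top boundary broken line, as a function of the first coordinate. -/
def topF (D : Datum A m) (x : ℝ) : ℝ := sSup {y | (x, y) ∈ topLine D}

/-- The bottom boundary broken line, as a function of the first coordinate. -/
def botF (D : Datum A m) (x : ℝ) : ℝ := sInf {y | (x, y) ∈ botLine D}

/-- The polygonal region determined by `(π, λ, τ)`. -/
def Region (D : Datum A m) : Set (ℝ × ℝ) :=
  {p | 0 ≤ p.1 ∧ p.1 ≤ totalLen D ∧ botF D p.1 ≤ p.2 ∧ p.2 ≤ topF D p.1}

/-- The side identifications of the polygon. -/
def Glued (D : Datum A m) (p q : ℝ × ℝ) : Prop :=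
  ∃ α : A, (p ∈ botSide D α ∧ q = p + glueVec D α) ∨ (p ∈ topSide D α ∧ q = p - glueVec D α)

/-- A rightward horizontal trajectory on the surface: `n` horizontal segments inside the
polygon, consecutive ones linked by the side identifications, whose interiors avoid the
singularities. -/
def IsHorizTraj (D : Datum A m) (n : ℕ) (u w : ℕ → ℝ × ℝ) : Prop :=
  (∀ i < n, (u i).2 = (w i).2 ∧ (u i).1 < (w i).1 ∧ segment ℝ (u i) (w i) ⊆ Region D) ∧
  (∀ i, i + 1 < n → Glued D (w i) (u (i + 1))) ∧
  (∀ i < n, ∀ q ∈ openSegment ℝ (u i) (w i), q ∉ vertices D) ∧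
  (∀ i, i + 1 < n → w i ∉ vertices D)

/-- The rightward horizontal separatrix issued from `p` hits a singularity,
i.e. it is finite. -/
def ReachesSing (D : Datum A m) (p : ℝ × ℝ) : Prop :=
  ∃ n u w, 1 ≤ n ∧ IsHorizTraj D n u w ∧ u 0 = p ∧ w (n - 1) ∈ vertices D

/-- A horizontal saddle connection: a finite rightward horizontal trajectory joining two
singularity points. -/
def IsHorizSaddleConnection (D : Datum A m) (n : ℕ) (u w : ℕ → ℝ × ℝ) : Prop :=
  1 ≤ n ∧ IsHorizTraj D n u w ∧ u 0 ∈ vertices D ∧ w (n - 1) ∈ vertices D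

def HasHorizSaddleConnection (D : Datum A m) : Prop :=
  ∃ n u w, IsHorizSaddleConnection D n u w

/-- The set of points visited by the rightward horizontal trajectory issued from `p`. -/
def ReachSet (D : Datum A m) (p : ℝ × ℝ) : Set (ℝ × ℝ) :=
  {q | ∃ n u w, 1 ≤ n ∧ IsHorizTraj D n u w ∧ u 0 = p ∧ ∃ i < n, q ∈ segment ℝ (u i) (w i)}

/-- Minimality of the horizontal translation flow: every infinite rightward half-orbit is
dense in the surface (density up to the side identifications). -/
def FlowMinimal (D : Datum A m) : Prop :=
  ∀ p ∈ Region D, ¬ ReachesSing D p →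
    ∀ q ∈ Region D, ∀ ε : ℝ, 0 < ε →
      ∃ r ∈ ReachSet D p, ∃ q', Relation.EqvGen (Glued D) q q' ∧ dist r q' < ε

/-- The saddle connection `(n, u, w)` is a (horizontal) side of the polygon. -/
def IsSideConnection (D : Datum A m) (n : ℕ) (u w : ℕ → ℝ × ℝ) : Prop :=
  n = 1 ∧ ∃ β : A, D.tau β = 0 ∧
    (segment ℝ (u 0) (w 0) = topSide D β ∨ segment ℝ (u 0) (w 0) = botSide D β)

/-!
Take three unit intervals with top order `0 1 2`, bottom order `2 0 1` and
`τ = (√2, 2, -2)`. Since `τ₁ + τ₂ = 0`, the vertices `a₁ = (1, √2)` and `a₃ = (3, √2)` lie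
at the same height, and the horizontal segment joining them stays inside the polygon: it is a
saddle connection.

Inverting Rauzy–Veech induction from this datum, λ only grows, so it stays positive, and the
combinatorics passes through two stages and then runs forever around a loop of eight moves in
the Rauzy diagram. Along the loop τ is transformed linearly, and the τ at the entry of the
loop is an eigenvector of that linear map with eigenvalue `(√2 - 1)² = 3 - 2√2 > 0`. Hence τ
at every step is a positive multiple of one of ten explicit vectors, each of which lies in
the cone `Θ`.
-/

open Function Set

section Increment

variable {ι β : Type*} [DecidableEq ι]

def addAt [Add β] (f : ι → β) (w l : ι) : ι → β := update f w (f w + f l)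

theorem update_sub_addAt [AddGroup β] (f : ι → β) {w l : ι} (h : l ≠ w) :
    update (addAt f w l) w (addAt f w l w - addAt f w l l) = f := by
  simp [addAt, update_of_ne h, update_idem]

theorem addAt_pos [AddZeroClass β] [Preorder β] [AddLeftStrictMono β] {f : ι → β}
    (hf : ∀ a, 0 < f a) (w l : ι) (a : ι) : 0 < addAt f w l a := by
  rcases eq_or_ne a w with rfl | h
  · simpa [addAt] using add_pos (hf a) (hf l)
  · simpa [addAt, update_of_ne h] using hf a

theorem addAt_smul {M : Type*} [AddMonoid β] [DistribSMul M β] (c : M) (f : ι → β) (w l : ι) :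
    addAt (c • f) w l = c • addAt f w l := by
  simp [addAt, ← update_smul, smul_add]

end Increment

theorem InTheta.smul {ι : Type*} [Fintype ι] {n : ℕ} {p0 p1 : ι ≃ Fin (n+1)} {tau : ι → ℝ}
    (h : InTheta p0 p1 tau) {c : ℝ} (hc : 0 < c) : InTheta p0 p1 (c • tau) := by
  intro k hk
  have hsum : ∀ p : ι ≃ Fin (n+1),
      (∑ α, if (p α : ℕ) ≤ k then (c • tau) α else 0) =
        c * ∑ α, if (p α : ℕ) ≤ k then tau α else 0 := fun p => by
    rw [Finset.mul_sum]; exact Finset.sum_congr rfl fun α _ => by split_ifs <;> simp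
  rw [hsum, hsum]
  exact ⟨mul_pos hc (h k hk).1, mul_neg_of_pos_of_neg hc (h k hk).2⟩

def backStep (w l : A) (q0 q1 : A ≃ Fin (m+1)) (E : Datum A m) : Datum A m :=
  ⟨q0, q1, addAt E.lam w l, addAt E.tau w l⟩

-- The forward Rauzy move taking `(q0, q1)` to `(p0, p1)` in which the last top symbol `w`
-- beats the last bottom symbol `l`.
def IsTopMove (w l : A) (q0 q1 p0 p1 : A ≃ Fin (m+1)) : Prop :=
  topSym q0 = w ∧ botSym q1 = l ∧ l ≠ w ∧ (∀ α, p0 α = q0 α) ∧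
    ∀ α, (p1 α : ℕ) = if (q1 α : ℕ) ≤ (q1 w : ℕ) then (q1 α : ℕ)
      else if α = l then (q1 w : ℕ) + 1 else (q1 α : ℕ) + 1

def IsBotMove (w l : A) (q0 q1 p0 p1 : A ≃ Fin (m+1)) : Prop :=
  botSym q1 = w ∧ topSym q0 = l ∧ l ≠ w ∧ (∀ α, p1 α = q1 α) ∧
    ∀ α, (p0 α : ℕ) = if (q0 α : ℕ) ≤ (q0 w : ℕ) then (q0 α : ℕ)
      else if α = l then (q0 w : ℕ) + 1 else (q0 α : ℕ) + 1

theorem step_backStep_of_isTopMove {w l : A} {q0 q1 : A ≃ Fin (m+1)} {E : Datum A m}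
    (h : IsTopMove w l q0 q1 E.p0 E.p1) (hpos : ∀ a, 0 < E.lam a) :
    Step (backStep w l q0 q1 E) E := by
  obtain ⟨rfl, rfl, hne, hp0, hp1⟩ := h
  set D := backStep (topSym q0) (botSym q1) q0 q1 E
  have hlt : D.lam (botSym D.p1) < D.lam (topSym D.p0) := by
    simp [D, backStep, addAt, update_of_ne hne, hpos]
  refine ⟨?_, Or.inl ⟨hlt, Equiv.ext hp0, hp1, ?_⟩⟩
  · simp only [fwWinner, fwLoser, if_pos hlt]
    exact (update_sub_addAt E.tau hne).symm
  · exact (update_sub_addAt E.lam hne).symm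

theorem step_backStep_of_isBotMove {w l : A} {q0 q1 : A ≃ Fin (m+1)} {E : Datum A m}
    (h : IsBotMove w l q0 q1 E.p0 E.p1) (hpos : ∀ a, 0 < E.lam a) :
    Step (backStep w l q0 q1 E) E := by
  obtain ⟨rfl, rfl, hne, hp1, hp0⟩ := h
  set D := backStep (botSym q1) (topSym q0) q0 q1 E
  have hlt : D.lam (topSym D.p0) < D.lam (botSym D.p1) := by
    simp [D, backStep, addAt, update_of_ne hne, hpos]
  refine ⟨?_, Or.inr ⟨hlt, Equiv.ext hp1, hp0, ?_⟩⟩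
  · simp only [fwWinner, fwLoser, if_neg hlt.not_gt]
    exact (update_sub_addAt E.tau hne).symm
  · exact (update_sub_addAt E.lam hne).symm

theorem isCompact_segment {E : Type*} [AddCommGroup E] [Module ℝ E] [TopologicalSpace E]
    [IsTopologicalAddGroup E] [ContinuousSMul ℝ E] (a b : E) : IsCompact (segment ℝ a b) := by
  rw [← convexHull_pair]
  exact (toFinite _).isCompact_convexHull ℝ

theorem exists_mem_segment_of_mem_uIcc_fst {a b : ℝ × ℝ} {x : ℝ} (hx : x ∈ uIcc a.1 b.1) :
    ∃ y ∈ uIcc a.2 b.2, (x, y) ∈ segment ℝ a b := by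
  rw [← segment_eq_uIcc] at hx ⊢
  obtain ⟨s, t, hs, ht, hst, rfl⟩ := hx
  exact ⟨s • a.2 + t • b.2, ⟨s, t, hs, ht, hst, rfl⟩, s, t, hs, ht, hst, rfl⟩

section Polygon

variable {ι : Type*} [Fintype ι] {n : ℕ}

theorem bddAbove_topLine_fiber (D : Datum ι n) (x : ℝ) : BddAbove {y | (x, y) ∈ topLine D} :=
  ((isCompact_iUnion fun _ => isCompact_segment _ _).image continuous_snd).bddAbove.mono
    fun _ hy => mem_image_of_mem Prod.snd hy

theorem bddBelow_botLine_fiber (D : Datum ι n) (x : ℝ) : BddBelow {y | (x, y) ∈ botLine D} :=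
  ((isCompact_iUnion fun _ => isCompact_segment _ _).image continuous_snd).bddBelow.mono
    fun _ hy => mem_image_of_mem Prod.snd hy

theorem mem_region_of_between {D : Datum ι n} {x y y₀ y₁ : ℝ} (hx₀ : 0 ≤ x)
    (hx₁ : x ≤ totalLen D) (hbot : (x, y₀) ∈ botLine D) (hy₀ : y₀ ≤ y)
    (htop : (x, y₁) ∈ topLine D) (hy₁ : y ≤ y₁) : (x, y) ∈ Region D :=
  ⟨hx₀, hx₁, (csInf_le (bddBelow_botLine_fiber D x) hbot).trans hy₀,
    hy₁.trans (le_csSup (bddAbove_topLine_fiber D x) htop)⟩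

theorem hasHorizSaddleConnection_of_horizontal {D : Datum ι n} {a b c : ℝ} (hab : a < b)
    (ha : (a, c) ∈ vertices D) (hb : (b, c) ∈ vertices D)
    (hregion : ∀ x ∈ Icc a b, (x, c) ∈ Region D) (hfree : ∀ x ∈ Ioo a b, (x, c) ∉ vertices D) :
    HasHorizSaddleConnection D := by
  refine ⟨1, fun _ => (a, c), fun _ => (b, c), le_rfl, ⟨?_, ?_, ?_, ?_⟩, ha, hb⟩
  · intro _ _
    refine ⟨rfl, hab, ?_⟩
    rw [← Prod.image_mk_segment_left, segment_eq_Icc hab.le]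
    exact image_subset_iff.2 hregion
  · intro _ _; omega
  · intro _ _
    rw [← Prod.image_mk_openSegment_left, openSegment_eq_Ioo hab]
    exact forall_mem_image.2 hfree
  · intro _ _; omega

end Polygon

namespace Example

open Equiv

abbrev Stage := Fin 10

def nextStage (i : Stage) : Stage := if i = 9 then 2 else i + 1

def stage : ℕ → Stage
  | 0 => 0
  | n + 1 => nextStage (stage n)

-- `orbit n` has the permutations of stage `stage n`; `winner i` and `loser i` are those of the
-- forward step from stage `nextStage i` to stage `i`.
def perm0 : Stage → Perm (Fin 3) := ![1, 1, 1, swap 1 2, 1, swap 1 2, 1, 1, 1, 1]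

def perm1 : Stage → Perm (Fin 3) :=
  ![finRotate 3, finRotate 3, swap 0 2, swap 0 2, swap 0 2, swap 0 2, swap 0 2, finRotate 3,
    swap 0 2, finRotate 3]

def topWins : Stage → Bool := ![false, true, false, false, false, false, true, true, true, true]

def winner : Stage → Fin 3 := ![1, 2, 0, 0, 0, 0, 2, 2, 2, 2]

def loser : Stage → Fin 3 := ![2, 0, 1, 2, 1, 2, 1, 0, 1, 0]

theorem isMove_stage (i : Stage) :
    if topWins i then
      IsTopMove (winner i) (loser i) (perm0 (nextStage i)) (perm1 (nextStage i))
        (perm0 i) (perm1 i)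
    else
      IsBotMove (winner i) (loser i) (perm0 (nextStage i)) (perm1 (nextStage i))
        (perm0 i) (perm1 i) := by
  revert i
  unfold IsTopMove IsBotMove topSym botSym
  decide

theorem irreducible_perm (i : Stage) : Irreducible (perm0 i) (perm1 i) := by
  revert i
  unfold Irreducible
  decide

theorem sqrt_two_gt : (4 : ℝ) / 3 < √2 := by
  rw [Real.lt_sqrt (by norm_num)]; norm_num

theorem sqrt_two_lt : √2 < 10 / 7 := by
  rw [Real.sqrt_lt' (by norm_num)]; norm_num

def tauShape : Stage → Fin 3 → ℝ :=
  ![![√2, 2, -2], ![√2, 0, -2], ![√2, 0, √2 - 2], ![√2, 0, √2 - 2],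
    ![2 * √2 - 2, 0, √2 - 2], ![2 * √2 - 2, 0, √2 - 2], ![3 * √2 - 4, 0, √2 - 2],
    ![3 * √2 - 4, 0, √2 - 2], ![3 * √2 - 4, 0, 4 * √2 - 6], ![3 * √2 - 4, 0, 4 * √2 - 6]]

def factor (i : Stage) : ℝ := if i = 9 then 3 - 2 * √2 else 1

theorem factor_pos (i : Stage) : 0 < factor i := by
  unfold factor; split_ifs <;> linarith [sqrt_two_lt]

theorem addAt_tauShape (i : Stage) :
    addAt (tauShape i) (winner i) (loser i) = factor i • tauShape (nextStage i) := by
  funext a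
  fin_cases i <;> fin_cases a <;>
    simp [addAt, tauShape, winner, loser, factor, nextStage] <;>
    linarith [Real.sq_sqrt (show (0 : ℝ) ≤ 2 by norm_num)]

theorem inTheta_tauShape (i : Stage) : InTheta (perm0 i) (perm1 i) (tauShape i) := by
  intro k hk
  fin_cases i <;> interval_cases k <;> refine ⟨?_, ?_⟩ <;>
    simp [Fin.sum_univ_three, perm0, perm1, tauShape, Equiv.swap_apply_def] <;>
    linarith [sqrt_two_gt, sqrt_two_lt]

def start : Datum (Fin 3) 2 := ⟨perm0 0, perm1 0, 1, tauShape 0⟩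

def orbit : ℕ → Datum (Fin 3) 2
  | 0 => start
  | n + 1 => backStep (winner (stage n)) (loser (stage n)) (perm0 (stage (n + 1)))
      (perm1 (stage (n + 1))) (orbit n)

theorem orbit_p0 (n : ℕ) : (orbit n).p0 = perm0 (stage n) := by cases n <;> rfl

theorem orbit_p1 (n : ℕ) : (orbit n).p1 = perm1 (stage n) := by cases n <;> rfl

theorem orbit_lam_pos (n : ℕ) (a : Fin 3) : 0 < (orbit n).lam a := by
  induction n generalizing a with
  | zero => exact one_pos
  | succ n ih => exact addAt_pos ih _ _ a

theorem orbit_tau_eq_smul (n : ℕ) :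
    ∃ c : ℝ, 0 < c ∧ (orbit n).tau = c • tauShape (stage n) := by
  induction n with
  | zero => exact ⟨1, one_pos, (one_smul ℝ _).symm⟩
  | succ n ih =>
    obtain ⟨c, hc, hτ⟩ := ih
    refine ⟨c * factor (stage n), mul_pos hc (factor_pos _), ?_⟩
    change addAt (orbit n).tau _ _ = _
    rw [hτ, addAt_smul, addAt_tauShape, smul_smul]
    rfl

theorem step_orbit (n : ℕ) : Step (orbit (n + 1)) (orbit n) := by
  have hmove := isMove_stage (stage n)
  rw [← orbit_p0, ← orbit_p1] at hmove
  cases htop : topWins (stage n) <;> simp only [htop] at hmove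
  · exact step_backStep_of_isBotMove hmove (orbit_lam_pos n)
  · exact step_backStep_of_isTopMove hmove (orbit_lam_pos n)

theorem valid_orbit (n : ℕ) : Valid (orbit n) := by
  obtain ⟨c, hc, hτ⟩ := orbit_tau_eq_smul n
  refine ⟨orbit_lam_pos n, ?_, ?_⟩
  · rw [orbit_p0, orbit_p1, hτ]
    exact (inTheta_tauShape _).smul hc
  · rw [orbit_p0, orbit_p1]
    exact irreducible_perm _

theorem vertA_start : vertA start 0 = (0, 0) ∧ vertA start 1 = (1, √2) ∧
    vertA start 2 = (2, √2 + 2) ∧ vertA start 3 = (3, √2) := by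
  refine ⟨?_, ?_, ?_, ?_⟩ <;> rw [vertA, Fin.sum_univ_three, Fin.sum_univ_three] <;>
    norm_num +decide [start, perm0, tauShape, Matrix.cons_val_two]

theorem vertB_start : vertB start 0 = (0, 0) ∧ vertB start 1 = (1, -2) ∧
    vertB start 2 = (2, √2 - 2) ∧ vertB start 3 = (3, √2) := by
  refine ⟨?_, ?_, ?_, ?_⟩ <;> rw [vertB, Fin.sum_univ_three, Fin.sum_univ_three] <;>
    norm_num +decide [start, perm1, tauShape, Matrix.cons_val_two, sub_eq_add_neg]

theorem exists_mem_topLine_start {x : ℝ} (hx : x ∈ Icc 1 3) :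
    ∃ y, √2 ≤ y ∧ (x, y) ∈ topLine start := by
  obtain ⟨-, hA1, hA2, hA3⟩ := vertA_start
  rcases le_total x 2 with h | h
  · obtain ⟨y, hy, hmem⟩ := exists_mem_segment_of_mem_uIcc_fst
      (a := (1, √2)) (b := (2, √2 + 2)) (mem_uIcc_of_le hx.1 h)
    refine ⟨y, ?_, mem_iUnion.2 ⟨1, ?_⟩⟩
    · rcases mem_uIcc.1 hy with hy | hy <;> linarith [hy.1, hy.2]
    · show _ ∈ segment ℝ (vertA start 1) (vertA start 2)
      rwa [hA1, hA2]
  · obtain ⟨y, hy, hmem⟩ := exists_mem_segment_of_mem_uIcc_fst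
      (a := (2, √2 + 2)) (b := (3, √2)) (mem_uIcc_of_le h hx.2)
    refine ⟨y, ?_, mem_iUnion.2 ⟨2, ?_⟩⟩
    · rcases mem_uIcc.1 hy with hy | hy <;> linarith [hy.1, hy.2]
    · show _ ∈ segment ℝ (vertA start 2) (vertA start 3)
      rwa [hA2, hA3]

theorem exists_mem_botLine_start {x : ℝ} (hx : x ∈ Icc 1 3) :
    ∃ y, y ≤ √2 ∧ (x, y) ∈ botLine start := by
  obtain ⟨-, hB1, hB2, hB3⟩ := vertB_start
  rcases le_total x 2 with h | h
  · obtain ⟨y, hy, hmem⟩ := exists_mem_segment_of_mem_uIcc_fst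
      (a := (1, -2)) (b := (2, √2 - 2)) (mem_uIcc_of_le hx.1 h)
    refine ⟨y, ?_, mem_iUnion.2 ⟨0, ?_⟩⟩
    · rcases mem_uIcc.1 hy with hy | hy <;> linarith [hy.1, hy.2, sqrt_two_gt]
    · show _ ∈ segment ℝ (vertB start 1) (vertB start 2)
      rwa [hB1, hB2]
  · obtain ⟨y, hy, hmem⟩ := exists_mem_segment_of_mem_uIcc_fst
      (a := (2, √2 - 2)) (b := (3, √2)) (mem_uIcc_of_le h hx.2)
    refine ⟨y, ?_, mem_iUnion.2 ⟨1, ?_⟩⟩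
    · rcases mem_uIcc.1 hy with hy | hy <;> linarith [hy.1, hy.2]
    · show _ ∈ segment ℝ (vertB start 2) (vertB start 3)
      rwa [hB2, hB3]

theorem mem_region_start {x : ℝ} (hx : x ∈ Icc 1 3) : (x, √2) ∈ Region start := by
  obtain ⟨y₀, hy₀, hbot⟩ := exists_mem_botLine_start hx
  obtain ⟨y₁, hy₁, htop⟩ := exists_mem_topLine_start hx
  have hlen : totalLen start = 3 := by norm_num [totalLen, start]
  exact mem_region_of_between (by linarith [hx.1]) (hlen ▸ hx.2) hbot hy₀ htop hy₁

theorem not_mem_vertices_start {x : ℝ} (hx : x ∈ Ioo 1 3) : (x, √2) ∉ vertices start := by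
  obtain ⟨hA0, hA1, hA2, hA3⟩ := vertA_start
  obtain ⟨hB0, hB1, hB2, hB3⟩ := vertB_start
  rintro ⟨k, hk, h | h⟩ <;> interval_cases k <;>
    simp only [hA0, hA1, hA2, hA3, hB0, hB1, hB2, hB3, Prod.mk.injEq] at h <;>
    linarith [hx.1, hx.2, h.1, h.2, sqrt_two_gt]

theorem hasHorizSaddleConnection_start : HasHorizSaddleConnection start :=
  hasHorizSaddleConnection_of_horizontal (by norm_num)
    ⟨1, by norm_num, .inl vertA_start.2.1.symm⟩ ⟨3, le_rfl, .inl vertA_start.2.2.2.symm⟩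
    (fun _ => mem_region_start) (fun _ => not_mem_vertices_start)

end Example

/-- there exist translation surfaces with a horizontal saddle connection whose
backward Rauzy–Veech induction orbit is defined indefinitely. -/
theorem exists_surface_with_connection_and_infinite_backward_orbit :
    ∃ (m : ℕ) (D : Datum (Fin (m+1)) m), Valid D ∧
      HasHorizSaddleConnection D ∧
      ∃ x : ℕ → Datum (Fin (m+1)) m, x 0 = D ∧ IsBackwardOrbit x :=
  ⟨2, Example.start, Example.valid_orbit 0, Example.hasHorizSaddleConnection_start,
    Example.orbit, rfl, fun n => ⟨Example.step_orbit n, Example.valid_orbit n⟩⟩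

end RV
end
end

section
/- If β = π₀⁻¹(d), τ ∈ Θ^𝒜(π) and τ_β = 0, then Σ_{α∈𝒜} τ_α ≠ 0. Symmetrically, if β = π₁⁻¹(d), τ ∈ Θ^𝒜(π) and τ_β = 0, then Σ_{α∈𝒜} τ_α ≠ 0. -/
open scoped BigOperators
noncomputable section

namespace RV

variable {A : Type*} [Fintype A] [DecidableEq A] {m : ℕ}

theorem eq_symm_last_of_not_le_pred {ι : Type*} (p : ι ≃ Fin (m+1)) {α : ι}
    (h : ¬ (p α : ℕ) ≤ m - 1) : α = p.symm (Fin.last m) :=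
  p.eq_symm_apply.mpr <| Fin.ext <| by have := (p α).isLt; simp only [Fin.val_last]; omega

theorem sum_ite_le_pred_eq_sum {ι M : Type*} [Fintype ι] [AddCommMonoid M]
    (p : ι ≃ Fin (m+1)) (f : ι → M) (hf : f (p.symm (Fin.last m)) = 0) :
    (∑ α, if (p α : ℕ) ≤ m - 1 then f α else 0) = ∑ α, f α :=
  Finset.sum_congr rfl fun α _ => by
    split_ifs with h
    · rfl
    · rw [eq_symm_last_of_not_le_pred p h, hf]

theorem sum_tau_ne_zero_of_last_tau_eq_zero_general
    (hm : 1 ≤ m) (p0 p1 : A ≃ Fin (m+1))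
    (tau : A → ℝ) (hΘ : InTheta p0 p1 tau) :
    (tau (topSym p0) = 0 → (∑ α, tau α) ≠ 0) ∧
    (tau (botSym p1) = 0 → (∑ α, tau α) ≠ 0) := by
  obtain ⟨hpos, hneg⟩ := hΘ (m - 1) (by omega)
  refine ⟨fun htop hsum => ?_, fun hbot hsum => ?_⟩
  · rw [sum_ite_le_pred_eq_sum p0 tau htop, hsum] at hpos
    exact lt_irrefl 0 hpos
  · rw [sum_ite_le_pred_eq_sum p1 tau hbot, hsum] at hneg
    exact lt_irrefl 0 hneg

/-- if `β = π₀⁻¹(d)` (resp. `β = π₁⁻¹(d)`), `τ ∈ Θ^𝒜(π)` and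
`τ_β = 0`, then `∑_α τ_α ≠ 0`. -/
theorem sum_tau_ne_zero_of_last_tau_eq_zero
    (hm : 1 ≤ m) (p0 p1 : A ≃ Fin (m+1)) (hirr : Irreducible p0 p1)
    (tau : A → ℝ) (hΘ : InTheta p0 p1 tau) :
    (tau (topSym p0) = 0 → (∑ α, tau α) ≠ 0) ∧
    (tau (botSym p1) = 0 → (∑ α, tau α) ≠ 0) :=
  sum_tau_ne_zero_of_last_tau_eq_zero_general hm p0 p1 tau hΘ

end RV
end
end
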